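/- In the quotient ring R = \mathbb{Q}[y1,y2,Y1,Y2]/(y1 Y1 - 1, y2 Y2 - 1, D1, D2), where w = 2 y1 + 2 y2 + 2 Y1 + 2 Y2 + y1 Y2 + y2 Y1 + y1 y2 + Y1 Y2 and D1 = y1 \partial_{y1} w - Y1 \partial_{Y1} w, D2 = y2 \partial_{y2} w - Y2 \partial_{Y2} w (derivatives taken in the polynomial ring before quotienting), the element w satisfies (w - 12)(w + 4) = 0. -/

import Mathlib

/-!
Put `u = y₁ + Y₁ + 2` and `v = y₂ + Y₂ + 2`. Then `w + 4 = u v`, `D1 = (y₁ - Y₁) v` and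
`D2 = (y₂ - Y₂) u`. Since `y₁ Y₁ = 1`, `(y₁ - Y₁)² = (y₁ + Y₁)² - 4 = (u - 4) u`, so multiplying
`D1 = 0` by `y₁ - Y₁` gives `(u - 4) u v = 0`; symmetrically `(v - 4) v u = 0`. These two cubic
relations give `(uv)² = 4 u v² = 16 uv`, i.e. `(w + 4)(w - 12) = 0`.
-/

open MvPolynomial

/-- The potential `w = 2y₁ + 2y₂ + 2Y₁ + 2Y₂ + y₁Y₂ + y₂Y₁ + y₁y₂ + Y₁Y₂` with
`X 0 = y₁`, `X 1 = y₂`, `X 2 = Y₁`, `X 3 = Y₂`. -/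
noncomputable def wBl5 : MvPolynomial (Fin 4) ℚ :=
  2 * X 0 + 2 * X 1 + 2 * X 2 + 2 * X 3 + X 0 * X 3 + X 1 * X 2 + X 0 * X 1 + X 2 * X 3

/-- The logarithmic critical point equation `D1 = y₁ ∂_{y₁} w - Y₁ ∂_{Y₁} w`. -/
noncomputable def D1Bl5 : MvPolynomial (Fin 4) ℚ :=
  X 0 * pderiv (0 : Fin 4) wBl5 - X 2 * pderiv (2 : Fin 4) wBl5

/-- The logarithmic critical point equation `D2 = y₂ ∂_{y₂} w - Y₂ ∂_{Y₂} w`. -/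
noncomputable def D2Bl5 : MvPolynomial (Fin 4) ℚ :=
  X 1 * pderiv (1 : Fin 4) wBl5 - X 3 * pderiv (3 : Fin 4) wBl5

/-- The ideal of relations for the Jacobian ring of the degree-four del Pezzo. -/
noncomputable def jacIdealBl5 : Ideal (MvPolynomial (Fin 4) ℚ) :=
  Ideal.span {X 0 * X 2 - 1, X 1 * X 3 - 1, D1Bl5, D2Bl5}

section CommRing

variable {R : Type*} [CommRing R]

theorem sub_four_mul_mul_eq_zero_of_sub_mul_eq_zero {y Y c : R} (hyY : y * Y = 1)
    (h : (y - Y) * c = 0) : (y + Y + 2 - 4) * (y + Y + 2) * c = 0 := by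
  linear_combination (y - Y) * h + 4 * c * hyY

theorem mul_sub_sixteen_mul_eq_zero {u v : R} (hu : (u - 4) * u * v = 0)
    (hv : (v - 4) * v * u = 0) : (u * v - 16) * (u * v) = 0 := by
  linear_combination v * hu + 4 * hv

theorem sub_twelve_mul_add_four_eq_zero {y₁ y₂ Y₁ Y₂ w : R} (h₁ : y₁ * Y₁ = 1)
    (h₂ : y₂ * Y₂ = 1) (hD₁ : (y₁ - Y₁) * (y₂ + Y₂ + 2) = 0)
    (hD₂ : (y₂ - Y₂) * (y₁ + Y₁ + 2) = 0) (hw : w + 4 = (y₁ + Y₁ + 2) * (y₂ + Y₂ + 2)) :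
    (w - 12) * (w + 4) = 0 := by
  have key := mul_sub_sixteen_mul_eq_zero
    (sub_four_mul_mul_eq_zero_of_sub_mul_eq_zero h₁ hD₁)
    (sub_four_mul_mul_eq_zero_of_sub_mul_eq_zero h₂ hD₂)
  rw [← hw] at key
  linear_combination key

end CommRing

theorem pderiv_ofNat {σ R : Type*} [CommSemiring R] (i : σ) (n : ℕ) [n.AtLeastTwo] :
    pderiv i (no_index (OfNat.ofNat n) : MvPolynomial σ R) = 0 := by
  rw [← map_ofNat C n, pderiv_C]

theorem wBl5_add_four :
    wBl5 + 4 = (X 0 + X 2 + 2) * (X 1 + X 3 + 2 : MvPolynomial (Fin 4) ℚ) := by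
  rw [wBl5]
  ring

theorem D1Bl5_eq : D1Bl5 = (X 0 - X 2) * (X 1 + X 3 + 2 : MvPolynomial (Fin 4) ℚ) := by
  simp only [D1Bl5, wBl5, map_add, Derivation.leibniz, pderiv_X, pderiv_ofNat, Pi.single_apply,
    Fin.reduceEq, if_true, if_false, smul_eq_mul]
  ring

theorem D2Bl5_eq : D2Bl5 = (X 1 - X 3) * (X 0 + X 2 + 2 : MvPolynomial (Fin 4) ℚ) := by
  simp only [D2Bl5, wBl5, map_add, Derivation.leibniz, pderiv_X, pderiv_ofNat, Pi.single_apply,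
    Fin.reduceEq, if_true, if_false, smul_eq_mul]
  ring

theorem mk_jacIdealBl5_eq_zero {p : MvPolynomial (Fin 4) ℚ}
    (hp : p ∈ ({X 0 * X 2 - 1, X 1 * X 3 - 1, D1Bl5, D2Bl5} : Set (MvPolynomial (Fin 4) ℚ))) :
    Ideal.Quotient.mk jacIdealBl5 p = 0 :=
  Ideal.Quotient.eq_zero_iff_mem.mpr (Ideal.subset_span hp : p ∈ jacIdealBl5)

/-- In the Jacobian ring `ℚ[y₁,y₂,Y₁,Y₂]/(y₁Y₁-1, y₂Y₂-1, D1, D2)` of the disk potential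
of `Bl⁵ℙ²`, the element `w` satisfies `(w - 12)(w + 4) = 0`. -/
theorem jacobian_relation_Bl5P2 :
    (Ideal.Quotient.mk jacIdealBl5 wBl5 - 12) *
        (Ideal.Quotient.mk jacIdealBl5 wBl5 + 4) = 0 := by
  set q := Ideal.Quotient.mk jacIdealBl5
  refine sub_twelve_mul_add_four_eq_zero (y₁ := q (X 0)) (y₂ := q (X 1)) (Y₁ := q (X 2))
    (Y₂ := q (X 3)) ?_ ?_ ?_ ?_ ?_
  · have h := mk_jacIdealBl5_eq_zero (p := X 0 * X 2 - 1) (by simp)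
    rwa [map_sub, map_mul, map_one, sub_eq_zero] at h
  · have h := mk_jacIdealBl5_eq_zero (p := X 1 * X 3 - 1) (by simp)
    rwa [map_sub, map_mul, map_one, sub_eq_zero] at h
  · have h := mk_jacIdealBl5_eq_zero (p := D1Bl5) (by simp)
    rwa [D1Bl5_eq, map_mul, map_sub, map_add, map_add, map_ofNat] at h
  · have h := mk_jacIdealBl5_eq_zero (p := D2Bl5) (by simp)
    rwa [D2Bl5_eq, map_mul, map_sub, map_add, map_add, map_ofNat] at h
  · have h := congrArg q wBl5_add_four
    rwa [map_add, map_ofNat, map_mul, map_add, map_add, map_add, map_add, map_ofNat] at h
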